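/- Let π be a path with e edges and v internal vertices, where each edge contributes a rotation in ℤ, the sum of absolute values of all edge rotations is at most m, and each internal vertex contributes a rotation in {-2,-1,0,1,2}, with the property that every internal vertex of rotation 2 can be charged a rotation of -1 from one of its two incident path edges (distinct vertices charging distinct edge-ends). If v ≤ Δ_F - 2, then the total rotation of π is at most m + Δ_F - 2. -/

import Mathlib

/-!
Split each edge rotation into its two end rotations and its middle rotation.  Every
vertex of rotation `2` charges an end of rotation `-1`, which costs `2` more in the bend
count `∑ |·|` than it contributes to the rotation; this pays for the excess `1` of that
vertex over the bound `1`.  Hence the total rotation is at most `m + v ≤ m + Δ_F - 2`.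
-/

open Finset

theorem sum_le_card_add_card_eq_two {ι : Type*} [Fintype ι] (f : ι → ℤ) (hf : ∀ i, f i ≤ 2) :
    ∑ i, f i ≤ Fintype.card ι + Fintype.card {i // f i = 2} := by
  classical
  calc ∑ i, f i ≤ ∑ i, (1 + if f i = 2 then 1 else 0) := by
        refine sum_le_sum fun i _ => ?_
        have := hf i
        split_ifs <;> omega
    _ = Fintype.card ι + Fintype.card {i // f i = 2} := by
        rw [sum_add_distrib, sum_boole, Fintype.card_subtype]
        simp

theorem sum_add_two_mul_card_le_sum_abs_of_injective {α κ : Type*} [Fintype α] [Fintype κ]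
    (f : κ → ℤ) {g : α → κ} (hg : Function.Injective g) (hfg : ∀ x, f (g x) = -1) :
    ∑ p, f p + 2 * Fintype.card α ≤ ∑ p, |f p| := by
  classical
  have hcharged : ∑ p ∈ univ.image g, (|f p| - f p) = 2 * Fintype.card α := by
    rw [sum_image fun x _ y _ h => hg h]
    simp [hfg, mul_comm]
  have hsub : ∑ p ∈ univ.image g, (|f p| - f p) ≤ ∑ p, (|f p| - f p) :=
    sum_le_univ_sum_of_nonneg fun p => sub_nonneg.mpr (le_abs_self (f p))
  linarith [sum_sub_distrib (s := univ) (fun p => |f p|) f]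

theorem sum_prod_bool_ite {ι M : Type*} [Fintype ι] [AddCommMonoid M] (a b : ι → M) :
    ∑ p : ι × Bool, (if p.2 then a p.1 else b p.1) = ∑ i, (a i + b i) := by
  simp [Fintype.sum_prod_type]

theorem path_rotation_bound_optimal_general (e v : ℕ) (m ΔF : ℤ)
    (a b mid : Fin e → ℤ) (vr : Fin v → ℤ)
    (hbends : ∑ j, (|a j| + |b j| + |mid j|) ≤ m)
    (hvr : ∀ i, -2 ≤ vr i ∧ vr i ≤ 2)
    (charge : {i : Fin v // vr i = 2} → Fin e × Bool)
    (hinj : Function.Injective charge)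
    (hcharge : ∀ i, (if (charge i).2 then a (charge i).1 else b (charge i).1) = -1)
    (hv : (v : ℤ) ≤ ΔF - 2) :
    (∑ j, (a j + b j + mid j)) + (∑ i, vr i) ≤ m + ΔF - 2 := by
  set f : Fin e × Bool → ℤ := fun p => if p.2 then a p.1 else b p.1
  have hends := sum_add_two_mul_card_le_sum_abs_of_injective f hinj hcharge
  have hvertices : ∑ i, vr i ≤ v + Fintype.card {i // vr i = 2} := by
    simpa using sum_le_card_add_card_eq_two vr fun i => (hvr i).2
  have hsplit : ∑ j, (a j + b j + mid j) = ∑ p, f p + ∑ j, mid j := by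
    rw [sum_prod_bool_ite, ← sum_add_distrib]
  have hsplit_abs : ∑ j, (|a j| + |b j| + |mid j|) = ∑ p, |f p| + ∑ j, |mid j| := by
    simp only [f, apply_ite abs]
    rw [sum_prod_bool_ite (fun j => |a j|) (fun j => |b j|), ← sum_add_distrib]
  have hmid : ∑ j, mid j ≤ ∑ j, |mid j| := sum_le_sum fun j _ => le_abs_self _
  linarith

/-- consider a path with `e` edges and `v` internal vertices.
Each edge `j` has rotation `a j + b j + mid j`, where `a j, b j ∈ {-1,0,1}` are
the rotations at its two ends and `mid j` is the rotation in its middle; the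
total number of bends `∑ (|a j| + |b j| + |mid j|)` is at most `m`.  Each
internal vertex has rotation in `[-2,2]`, and every internal vertex of
rotation 2 is charged an edge-end of rotation -1 (distinct vertices charging
distinct edge-ends, i.e. the charging map is injective).  If `v ≤ Δ_F - 2`,
then the total rotation of the path is at most `m + Δ_F - 2`. -/
theorem path_rotation_bound_optimal (e v : ℕ) (m ΔF : ℤ)
    (a b mid : Fin e → ℤ) (vr : Fin v → ℤ)
    (ha : ∀ j, a j = -1 ∨ a j = 0 ∨ a j = 1)
    (hb : ∀ j, b j = -1 ∨ b j = 0 ∨ b j = 1)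
    (hbends : ∑ j, (|a j| + |b j| + |mid j|) ≤ m)
    (hvr : ∀ i, -2 ≤ vr i ∧ vr i ≤ 2)
    (charge : {i : Fin v // vr i = 2} → Fin e × Bool)
    (hinj : Function.Injective charge)
    (hcharge : ∀ i, (if (charge i).2 then a (charge i).1 else b (charge i).1) = -1)
    (hv : (v : ℤ) ≤ ΔF - 2) :
    (∑ j, (a j + b j + mid j)) + (∑ i, vr i) ≤ m + ΔF - 2 :=
  path_rotation_bound_optimal_general e v m ΔF a b mid vr hbends hvr charge hinj hcharge hv
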